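/- A matroid G is line-closed if and only if for every flat X of G, every basis of X has line-closure equal to X. -/

import Mathlib

/-- A set `S` is line-closed in the matroid `M` if it contains the closure of
each pair of its elements. -/
def IsLineClosed {n : ℕ} (M : Matroid (Fin n)) (S : Set (Fin n)) : Prop :=
  ∀ i ∈ S, ∀ j ∈ S, M.closure {i, j} ⊆ S

/-- The line-closure of `S`: the intersection of all line-closed sets containing `S`. -/
def lineClosure {n : ℕ} (M : Matroid (Fin n)) (S : Set (Fin n)) : Set (Fin n) :=
  ⋂₀ {T | S ⊆ T ∧ IsLineClosed M T}

/-!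
If every line-closed set is closed, then the line-closure of an independent set `B` is a flat
squeezed between `B` and `cl B`, hence equals `cl B`; applied to a basis of a flat `X` this
gives `X`. Conversely, for a line-closed `S` with basis `B`, the set `B` is also a basis of the
flat `cl S`, so `cl S = ℓc B ⊆ S`.
-/

section LineClosure

variable {n : ℕ} {M : Matroid (Fin n)} {S T : Set (Fin n)}

lemma subset_lineClosure : S ⊆ lineClosure M S :=
  fun _ hx _ hT ↦ hT.1 hx

lemma lineClosure_subset (hST : S ⊆ T) (hT : IsLineClosed M T) : lineClosure M S ⊆ T :=
  Set.sInter_subset_of_mem ⟨hST, hT⟩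

lemma isLineClosed_lineClosure : IsLineClosed M (lineClosure M S) :=
  fun i hi j hj _ hx T hT ↦ hT.2 i (hi T hT) j (hj T hT) hx

lemma Matroid.IsFlat.isLineClosed {F : Set (Fin n)} (hF : M.IsFlat F) : IsLineClosed M F :=
  fun _ hi _ hj ↦ hF.closure ▸ M.closure_subset_closure (Set.pair_subset hi hj)

lemma lineClosure_eq_closure (h : ∀ S, IsLineClosed M S → M.closure S = S)
    (hS : S ⊆ M.E) : lineClosure M S = M.closure S := by
  refine (lineClosure_subset (M.subset_closure S) (M.isFlat_closure S).isLineClosed).antisymm ?_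
  calc M.closure S ⊆ M.closure (lineClosure M S) := M.closure_subset_closure subset_lineClosure
    _ = lineClosure M S := h _ isLineClosed_lineClosure

end LineClosure

/-- A matroid is line-closed iff every basis of every flat has line-closure equal to
the flat. -/
theorem lineClosed_iff_basis_lineClosure {n : ℕ} (M : Matroid (Fin n))
    (hE : M.E = Set.univ) :
    (∀ S : Set (Fin n), IsLineClosed M S → M.closure S = S) ↔
    (∀ X : Set (Fin n), M.closure X = X →
      ∀ B : Set (Fin n), M.IsBasis B X → lineClosure M B = X) := by
  have hground (S : Set (Fin n)) : S ⊆ M.E := hE ▸ Set.subset_univ S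
  constructor
  · intro h X hX B hB
    rw [lineClosure_eq_closure h (hground B), hB.closure_eq_closure, hX]
  · intro h S hS
    obtain ⟨B, hB⟩ := M.exists_isBasis S (hground S)
    have hclS : lineClosure M B = M.closure S :=
      h _ (M.closure_closure S) B hB.isBasis_closure_right
    exact (hclS ▸ lineClosure_subset hB.subset hS).antisymm (M.subset_closure S (hground S))
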